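/- Let N ≥ 2 and let r be an ultrametric on {1,…,N} with r(i,j) > 0 for i ≠ j, whose enumeration is length-minimal. Then for every n with 2 ≤ n ≤ N: r(n−1, n) = min_{1 ≤ k ≤ n−1} r(k, n). -/

import Mathlib

open Finset

/-- `r` is an ultrametric matrix on `{1,…,N}` (encoded by `Fin N`): nonnegative,
symmetric, vanishing on the diagonal, and satisfying the strong triangle inequality. -/
def IsUltramat {N : ℕ} (r : Fin N → Fin N → ℝ) : Prop :=
  (∀ i j, 0 ≤ r i j) ∧ (∀ i j, r i j = r j i) ∧ (∀ i, r i i = 0) ∧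
    (∀ i j k, r i k ≤ max (r i j) (r j k))

/-- `ell r n` is the total length `ℓ_n(r)` of the subtree spanned by the first `n`
points: half the minimum of `Σ_{i=1}^n r(i,σ(i))` over single-`n`-cycle permutations `σ`
of `{1,…,n}`, for `2 ≤ n ≤ N`; and `0` otherwise (in particular `ℓ_1(r) = 0`). -/
noncomputable def ell {N : ℕ} (r : Fin N → Fin N → ℝ) (n : ℕ) : ℝ :=
  if h : 2 ≤ n ∧ n ≤ N then
    (1 / 2) * sInf { x : ℝ | ∃ σ : Equiv.Perm (Fin n), σ.IsCycle ∧ σ.support = Finset.univ ∧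
      x = ∑ i : Fin n, r (Fin.castLE h.2 i) (Fin.castLE h.2 (σ i)) }
  else 0

/-- The enumeration of the points of `r` is length-minimal: for every permutation `τ` of
`{1,…,N}`, the vector `(ℓ_1(r),…,ℓ_N(r))` is lexicographically at most
`(ℓ_1(r^τ),…,ℓ_N(r^τ))`, where `r^τ(i,j) = r(τ(i),τ(j))`. -/
def LengthMinimal {N : ℕ} (r : Fin N → Fin N → ℝ) : Prop :=
  ∀ τ : Equiv.Perm (Fin N),
    (∀ n, n ≤ N → ell r n = ell (fun i j => r (τ i) (τ j)) n) ∨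
    (∃ n, n ≤ N ∧ (∀ m, m < n → ell r m = ell (fun i j => r (τ i) (τ j)) m) ∧
      ell r n < ell (fun i j => r (τ i) (τ j)) n)

/-!
Write `minTour S` for the cost of a cheapest Hamiltonian cycle through a finite set `S`, so that
`ℓ_n` is half the `minTour` of the first `n` points. Length-minimality makes the enumeration
greedy: if `S` is the set of points before `w` and `b` comes after `w`, swapping `w` and `b`
cannot decrease `ℓ_{w+1}`, so `minTour (S ∪ {w}) ≤ minTour (S ∪ {b})`.

Argue by strong induction on `n`, and suppose some `k < n - 1` has `r(k, n) < t := r(n - 1, n)`.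
Let `w` be the first point after `k` with `r(w, n) ≥ t`. As `r(w - 1, n) < t`, the strong triangle
inequality gives `r(w - 1, w) ≥ t`, so by the induction hypothesis every point of `S` is at
distance `≥ t` from `w`. Hence deleting `w` from an optimal tour of `S ∪ {w}` saves at least `t`,
and at least `2t - r(p, q)` where `p`, `q` are the neighbours of `w`. On the other hand `n` can
be inserted into an optimal tour of `S` at an extra cost `< t`, right after a point at distance
`< t` from `n` whose successor is farther away; and if all of `S` is within distance `< t` of
`n`, at an extra cost `< 2t - r(p, q)`, into an edge at least as long as `r(p, q)`. Either way
`minTour (S ∪ {n}) < minTour (S ∪ {w})`, contradicting greediness.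
-/

open Equiv Equiv.Perm

theorem Equiv.Perm.SameCycle.of_forall_sameCycle_apply {α : Type*} [Finite α] {f g : Perm α}
    (h : ∀ z, g.SameCycle z (f z)) {x y : α} (hxy : f.SameCycle x y) : g.SameCycle x y := by
  obtain ⟨n, rfl⟩ := hxy.exists_nat_pow_eq
  clear hxy
  induction n with
  | zero => exact SameCycle.refl _ _
  | succ n ih => rw [pow_succ', mul_apply]; exact ih.trans (h _)

theorem Equiv.Perm.SameCycle.exists_apply_not {α : Type*} [Finite α] {f : Perm α} {P : α → Prop}
    {x y : α} (hxy : f.SameCycle x y) (hx : P x) (hy : ¬ P y) : ∃ p, P p ∧ ¬ P (f p) := by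
  by_contra! H
  obtain ⟨n, rfl⟩ := hxy.exists_nat_pow_eq
  clear hxy
  induction n with
  | zero => exact hy hx
  | succ n ih => rw [pow_succ', mul_apply] at hy; exact ih fun h => hy (H _ h)

theorem Equiv.Perm.isCycle_extendDomain {α β : Type*} {p : β → Prop} [DecidablePred p]
    {σ : Perm α} (f : α ≃ Subtype p) : (σ.extendDomain f).IsCycle ↔ σ.IsCycle := by
  refine ⟨fun ⟨z, hz, hcyc⟩ => ?_, IsCycle.extendDomain f⟩
  by_cases hpz : p z
  · obtain ⟨a, rfl⟩ : ∃ a, (f a : β) = z := ⟨f.symm ⟨z, hpz⟩, by simp⟩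
    refine ⟨a, fun h => hz (by rw [extendDomain_apply_image, h]), fun y hy => ?_⟩
    exact sameCycle_extendDomain.mp
      (hcyc fun h => hy (f.injective (Subtype.ext (by rw [← h, extendDomain_apply_image]))))
  · exact absurd (extendDomain_apply_not_subtype σ f hpz) hz

section Tours

variable {α : Type*} [DecidableEq α]

theorem sum_mul_swap_apply (r : α → α → ℝ) {σ : Perm α} {S : Finset α} {p b : α} (hp : p ∈ S)
    (hb : b ∉ S) (hσb : σ b = b) :
    ∑ z ∈ insert b S, r z ((σ * swap p b) z) =
      ∑ z ∈ S, r z (σ z) + r p b + r b (σ p) - r p (σ p) := by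
  have hpb : p ≠ b := by rintro rfl; exact hb hp
  have hrest : ∑ z ∈ S.erase p, r z ((σ * swap p b) z) = ∑ z ∈ S.erase p, r z (σ z) :=
    Finset.sum_congr rfl fun z hz => by
      rw [mul_apply, swap_apply_of_ne_of_ne (Finset.ne_of_mem_erase hz)
        (ne_of_mem_of_not_mem (Finset.mem_of_mem_erase hz) hb)]
  rw [Finset.sum_insert hb, ← Finset.add_sum_erase S _ hp, ← Finset.add_sum_erase S _ hp, hrest]
  simp only [mul_apply, swap_apply_left, swap_apply_right, hσb]
  ring

variable [Fintype α]

theorem Equiv.Perm.IsCycle.mul_swap_of_apply_eq {σ : Perm α} (hσ : σ.IsCycle) {p b : α}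
    (hp : σ p ≠ p) (hb : σ b = b) : (σ * swap p b).IsCycle := by
  have hpb : p ≠ b := by rintro rfl; exact hp hb
  have hstep : ∀ z, (σ * swap p b).SameCycle z (σ z) := by
    intro z
    by_cases hzp : z = p
    · have h : (σ * swap p b) ((σ * swap p b) p) = σ p := by simp [mul_apply, hb]
      rw [hzp, ← h, sameCycle_apply_right, sameCycle_apply_right]
    by_cases hzb : z = b
    · rw [hzb, hb]
    · have h : (σ * swap p b) z = σ z := by simp [mul_apply, swap_apply_of_ne_of_ne hzp hzb]
      rw [← h, sameCycle_apply_right]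
  refine ⟨p, by simpa [mul_apply, hb] using hpb.symm, fun y hy => ?_⟩
  by_cases hyb : y = b
  · have h1 : (σ * swap p b) p = y := by simp [mul_apply, hb, hyb]
    exact h1 ▸ sameCycle_apply_right.mpr (SameCycle.refl _ _)
  by_cases hyp : y = p
  · rw [hyp]
  refine (hσ.sameCycle hp fun h => hy ?_).of_forall_sameCycle_apply hstep
  simpa [mul_apply, swap_apply_of_ne_of_ne hyp hyb] using h

theorem Equiv.Perm.support_mul_swap_of_apply_eq {σ : Perm α} {p b : α}
    (hp : σ p ≠ p) (hb : σ b = b) : (σ * swap p b).support = insert b σ.support := by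
  have hpb : p ≠ b := by rintro rfl; exact hp hb
  have hσpb : σ p ≠ b := fun h => hpb (σ.injective (h.trans hb.symm))
  ext z
  by_cases hzp : z = p
  · subst hzp; simp [mul_apply, hb, hpb.symm, hp]
  by_cases hzb : z = b
  · subst hzb; simp [mul_apply, hσpb]
  · simp [mul_apply, swap_apply_of_ne_of_ne hzp hzb, hzb]

variable (r : α → α → ℝ)

def tourCosts (S : Finset α) : Set ℝ :=
  {x | ∃ σ : Perm α, σ.IsCycle ∧ σ.support = S ∧ x = ∑ z ∈ S, r z (σ z)}

noncomputable def minTour (S : Finset α) : ℝ := sInf (tourCosts r S)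

theorem tourCosts_finite (S : Finset α) : (tourCosts r S).Finite :=
  (Set.finite_range fun σ : Perm α => ∑ z ∈ S, r z (σ z)).subset
    fun _ ⟨σ, _, _, hx⟩ => ⟨σ, hx.symm⟩

theorem tourCosts_nonempty {S : Finset α} (hS : 2 ≤ S.card) : (tourCosts r S).Nonempty := by
  obtain ⟨σ, hσ, hsupp⟩ := S.exists_cycleOn
  have hS' : S.Nontrivial := Finset.one_lt_card_iff_nontrivial.mp hS
  have hsupp' : σ.support = S :=
    hsupp.antisymm fun z hz => mem_support.mpr (hσ.apply_ne hS' hz)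
  refine ⟨_, σ, isCycle_iff_exists_isCycleOn.mpr ⟨S, by simpa using hS', hσ, fun z hz => ?_⟩,
    hsupp', rfl⟩
  exact hsupp (mem_support.mpr hz)

variable {r}

theorem minTour_mem {S : Finset α} (hS : 2 ≤ S.card) : minTour r S ∈ tourCosts r S :=
  (tourCosts_nonempty r hS).csInf_mem (tourCosts_finite r S)

theorem minTour_le {S : Finset α} {x : ℝ} (hx : x ∈ tourCosts r S) : minTour r S ≤ x :=
  csInf_le (tourCosts_finite r S).bddBelow hx

theorem minTour_pair (hr : ∀ i j, r i j = r j i) {z y : α} (hzy : z ≠ y) :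
    minTour r {z, y} = 2 * r z y := by
  suffices tourCosts r {z, y} = {2 * r z y} by rw [minTour, this, csInf_singleton]
  ext x
  constructor
  · rintro ⟨σ, -, hsupp, rfl⟩
    have hσ : ∀ u ∈ ({z, y} : Finset α), σ u ≠ u ∧ σ u ∈ ({z, y} : Finset α) := fun u hu =>
      ⟨mem_support.mp (hsupp ▸ hu), hsupp ▸ apply_mem_support.mpr (hsupp ▸ hu)⟩
    have hσz : σ z = y := by simpa [(hσ z (by simp)).1] using (hσ z (by simp)).2
    have hσy : σ y = z := by simpa [(hσ y (by simp)).1] using (hσ y (by simp)).2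
    rw [Finset.sum_pair hzy, hσz, hσy, hr y z, Set.mem_singleton_iff]
    ring
  · rintro rfl
    refine ⟨swap z y, isCycle_swap hzy, support_swap hzy, ?_⟩
    rw [Finset.sum_pair hzy, swap_apply_left, swap_apply_right, hr y z]
    ring

theorem minTour_insert_le {σ : Perm α} (hσ : σ.IsCycle) {S : Finset α} (hsupp : σ.support = S)
    {p b : α} (hp : p ∈ S) (hb : b ∉ S) :
    minTour r (insert b S) ≤ ∑ z ∈ S, r z (σ z) + r p b + r b (σ p) - r p (σ p) := by
  have hσp : σ p ≠ p := mem_support.mp (hsupp ▸ hp)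
  have hσb : σ b = b := notMem_support.mp (hsupp ▸ hb)
  rw [← sum_mul_swap_apply r hp hb hσb]
  exact minTour_le ⟨_, hσ.mul_swap_of_apply_eq hσp hσb,
    by rw [support_mul_swap_of_apply_eq hσp hσb, hsupp], rfl⟩

theorem exists_minTour_add_le_minTour_insert {S : Finset α} {x : α} (hx : x ∉ S)
    (hS : 2 ≤ S.card) :
    ∃ p ∈ S, ∃ q ∈ S, minTour r S + r p x + r x q - r p q ≤ minTour r (insert x S) := by
  obtain ⟨ρ, hρ, hsupp, hcost⟩ := minTour_mem (r := r) (S := insert x S)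
    (by rw [Finset.card_insert_of_notMem hx]; omega)
  have hxρ : x ∈ ρ.support := hsupp ▸ Finset.mem_insert_self x S
  have hρx : ρ x ≠ x := mem_support.mp hxρ
  have hρρx : ρ (ρ x) ≠ x := by
    intro h
    have := congrArg Finset.card (hρ.eq_swap_of_apply_apply_eq_self hρx h ▸ hsupp)
    rw [card_support_swap hρx.symm, Finset.card_insert_of_notMem hx] at this
    omega
  obtain ⟨p, hρp⟩ : ∃ p, ρ p = x := ρ.surjective x
  -- deleting `x` from `ρ` gives `ρ' = ρ * swap p x`, and reinserting it after `p` gives back `ρ`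
  obtain ⟨ρ', hρ'def⟩ : ∃ ρ', ρ' = ρ * swap p x := ⟨_, rfl⟩
  have hρ' : ρ' = swap x (ρ x) * ρ := by rw [hρ'def, mul_swap_eq_swap_mul, hρp]
  have hsupp' : ρ'.support = S := by
    rw [hρ', support_swap_mul_eq _ _ hρρx, hsupp, Finset.sdiff_singleton_eq_erase,
      Finset.erase_insert hx]
  have hpx : p ≠ x := by rintro rfl; exact hρx hρp
  have hpS : p ∈ S :=
    (Finset.mem_insert.mp (hsupp ▸ mem_support.mpr (hρp ▸ hpx.symm))).resolve_left hpx
  have hρ'x : ρ' x = x := notMem_support.mp (hsupp' ▸ hx)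
  refine ⟨p, hpS, ρ' p, hsupp' ▸ apply_mem_support.mpr (hsupp' ▸ hpS), ?_⟩
  have hsum := sum_mul_swap_apply r hpS hx hρ'x
  rw [hρ'def, mul_swap_mul_self, ← hcost, ← hρ'def] at hsum
  have hle := minTour_le (r := r) ⟨ρ', hρ' ▸ hρ.swap_mul hρx hρρx, hsupp', rfl⟩
  linarith

end Tours

namespace IsUltramat

variable {N : ℕ} {r : Fin N → Fin N → ℝ}

theorem nonneg (hr : IsUltramat r) (i j : Fin N) : 0 ≤ r i j := hr.1 i j

theorem symm (hr : IsUltramat r) (i j : Fin N) : r i j = r j i := hr.2.1 i j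

theorem self (hr : IsUltramat r) (i : Fin N) : r i i = 0 := hr.2.2.1 i

theorem le_max (hr : IsUltramat r) (i j k : Fin N) : r i k ≤ max (r i j) (r j k) := hr.2.2.2 i j k

theorem eq_of_lt (hr : IsUltramat r) {x y z : Fin N} (h : r x z < r y z) : r x y = r y z := by
  have h1 := hr.le_max y x z
  have h2 := hr.le_max x z y
  rw [hr.symm z y] at h2
  rw [hr.symm y x] at h1
  apply le_antisymm <;> grind

theorem exists_le_apply_of_isCycle (hr : IsUltramat r) {σ : Perm (Fin N)}
    (hσ : σ.IsCycle) {u v : Fin N} (hu : σ u ≠ u) (hv : σ v ≠ v) :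
    ∃ p, σ p ≠ p ∧ r u v ≤ r p (σ p) := by
  rcases (hr.nonneg u v).eq_or_lt with h0 | h0
  · exact ⟨u, hu, h0 ▸ hr.nonneg _ _⟩
  obtain ⟨p, hp, hσp⟩ := (hσ.sameCycle hu hv).exists_apply_not (P := fun z => r u z < r u v)
    (by rwa [hr.self]) (lt_irrefl _)
  refine ⟨p, fun h => hσp (by rwa [h]), (not_lt.mp hσp).trans ?_⟩
  have := hr.le_max u p (σ p)
  grind

end IsUltramat

section Insertion

variable {N : ℕ} {r : Fin N → Fin N → ℝ}

theorem minTour_insert_le_add_of_lt (hr : IsUltramat r) {S : Finset (Fin N)} (hS : 2 ≤ S.card)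
    {b j y : Fin N} (hb : b ∉ S) (hj : j ∈ S) (hy : y ∈ S) (hjy : r j b < r y b) :
    minTour r (insert b S) ≤ minTour r S + r j b := by
  obtain ⟨σ, hσ, hsupp, hcost⟩ := minTour_mem (r := r) hS
  have hj' : σ j ≠ j := mem_support.mp (hsupp ▸ hj)
  have hy' : σ y ≠ y := mem_support.mp (hsupp ▸ hy)
  -- walking around the tour from `j` to `y`, some edge leaves the ball of radius `r j b` about `b`
  obtain ⟨p, hp, hσp⟩ := (hσ.sameCycle hj' hy').exists_apply_not
    (P := fun z => r z b ≤ r j b) le_rfl (not_le.mpr hjy)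
  have hpS : p ∈ S := hsupp ▸ mem_support.mpr fun h => hσp (by rwa [h])
  have hlong : r p (σ p) = r (σ p) b := hr.eq_of_lt (hp.trans_lt (not_le.mp hσp))
  have := minTour_insert_le (r := r) hσ hsupp hpS hb
  rw [← hcost, hlong, hr.symm b] at this
  linarith

theorem minTour_insert_le_of_forall_le (hr : IsUltramat r) {S : Finset (Fin N)}
    (hS : 2 ≤ S.card) {b : Fin N} (hb : b ∉ S) {T : ℝ} (hT : ∀ z ∈ S, r z b ≤ T) {u v : Fin N}
    (hu : u ∈ S) (hv : v ∈ S) :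
    minTour r (insert b S) ≤ minTour r S + 2 * T - r u v := by
  obtain ⟨σ, hσ, hsupp, hcost⟩ := minTour_mem (r := r) hS
  obtain ⟨p, hpσ, hp⟩ := hr.exists_le_apply_of_isCycle hσ
    (mem_support.mp (hsupp ▸ hu)) (mem_support.mp (hsupp ▸ hv))
  have hpS : p ∈ S := hsupp ▸ mem_support.mpr hpσ
  have hσpS : σ p ∈ S := hsupp ▸ apply_mem_support.mpr (hsupp ▸ hpS)
  have := minTour_insert_le (r := r) hσ hsupp hpS hb
  have h1 := hT p hpS
  have h2 := hT (σ p) hσpS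
  rw [← hcost, hr.symm b] at this
  linarith

theorem minTour_insert_lt_minTour_insert (hr : IsUltramat r) {S : Finset (Fin N)}
    {x b j : Fin N} {t : ℝ} (hx : x ∉ S) (hb : b ∉ S) (hxS : ∀ z ∈ S, t ≤ r z x) (hj : j ∈ S)
    (hjb : r j b < t) :
    minTour r (insert b S) < minTour r (insert x S) := by
  rcases Nat.lt_or_ge S.card 2 with hS | hS
  · obtain rfl : S = {j} := Finset.eq_singleton_iff_unique_mem.mpr
      ⟨hj, fun z hz => Finset.card_le_one.mp (by omega) z hz j hj⟩
    have hbj : b ≠ j := fun h => hb (h ▸ Finset.mem_singleton_self j)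
    have hxj : x ≠ j := fun h => hx (h ▸ Finset.mem_singleton_self j)
    rw [minTour_pair hr.symm hbj, minTour_pair hr.symm hxj, hr.symm b, hr.symm x]
    linarith [hxS j (Finset.mem_singleton_self j)]
  obtain ⟨p, hp, q, hq, hdel⟩ := exists_minTour_add_le_minTour_insert (r := r) hx hS
  have hpx := hxS p hp
  have hqx := hxS q hq
  rw [hr.symm q] at hqx
  by_cases hfar : ∃ y ∈ S, t ≤ r y b
  · obtain ⟨y, hy, hyb⟩ := hfar
    have hins := minTour_insert_le_add_of_lt hr hS hb hj hy (hjb.trans_le hyb)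
    have hpq := hr.le_max p x q
    grind
  · push Not at hfar
    obtain ⟨m, hm, hmax⟩ := S.exists_max_image (fun z => r z b) ⟨j, hj⟩
    have hins := minTour_insert_le_of_forall_le hr hS hb hmax hp hq
    linarith [hfar m hm]

end Insertion

section Relabel

variable {α β : Type*} [Fintype α] [DecidableEq α] [Fintype β] [DecidableEq β]

theorem setOf_isCycle_sum_eq_tourCosts (r : α → α → ℝ) {e : β → α} (he : e.Injective) :
    {x | ∃ σ : Perm β, σ.IsCycle ∧ σ.support = Finset.univ ∧ x = ∑ i, r (e i) (e (σ i))} =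
      tourCosts r (Finset.univ.image e) := by
  classical
  set f := Equiv.ofInjective e he
  have hsum : ∀ g : Perm α, ∑ z ∈ Finset.univ.image e, r z (g z) = ∑ i, r (e i) (g (e i)) :=
    fun g => Finset.sum_image fun i _ j _ h => he h
  ext x
  constructor
  · rintro ⟨σ, hσ, hsupp, rfl⟩
    refine ⟨σ.extendDomain f, hσ.extendDomain f, ?_, ?_⟩
    · ext z
      simp [support_extend_domain, hsupp, f]
    · rw [hsum]
      exact Finset.sum_congr rfl fun i _ => congrArg (r (e i)) (extendDomain_apply_image σ f i).symm
  · rintro ⟨τ, hτ, hsupp, rfl⟩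
    have hrange : ∀ z, z ∈ Set.range e ↔ z ∈ τ.support := fun z => by simp [hsupp]
    set σ : Perm β := f.trans ((τ.subtypePerm fun z => by simp [hrange]).trans f.symm)
    have hσ : ∀ i, e (σ i) = τ (e i) := fun i => by simp [σ, f, Equiv.apply_ofInjective_symm]
    have hext : σ.extendDomain f = τ := by
      ext z
      by_cases hz : z ∈ Set.range e
      · obtain ⟨i, rfl⟩ := hz
        exact (extendDomain_apply_image σ f i).trans (hσ i)
      · rw [extendDomain_apply_not_subtype σ f hz,
          notMem_support.mp fun h => hz ((hrange z).mpr h)]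
    refine ⟨σ, (isCycle_extendDomain f).mp (hext ▸ hτ), ?_, ?_⟩
    · refine Finset.eq_univ_of_forall fun i => mem_support.mpr fun h => ?_
      exact mem_support.mp ((hrange _).mp ⟨i, rfl⟩) (by rw [← hσ, h])
    · rw [hsum]
      exact Finset.sum_congr rfl fun i _ => by rw [hσ]

end Relabel

def firstPoints (N k : ℕ) : Finset (Fin N) := Finset.univ.filter fun z => (z : ℕ) < k

theorem mem_firstPoints {N k : ℕ} {z : Fin N} : z ∈ firstPoints N k ↔ (z : ℕ) < k := by
  simp [firstPoints]

theorem firstPoints_eq_image {N k : ℕ} (hk : k ≤ N) :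
    firstPoints N k = Finset.univ.image (Fin.castLE hk) := by
  ext z
  simp only [mem_firstPoints, Finset.mem_image, Finset.mem_univ, true_and]
  exact ⟨fun h => ⟨⟨z, h⟩, rfl⟩, fun ⟨i, hi⟩ => hi ▸ i.isLt⟩

theorem firstPoints_succ {N k : ℕ} (hk : k < N) :
    firstPoints N (k + 1) = insert ⟨k, hk⟩ (firstPoints N k) := by
  ext z
  simp only [mem_firstPoints, Finset.mem_insert, Fin.ext_iff]
  omega

section Ell

variable {N : ℕ} (r : Fin N → Fin N → ℝ)

theorem ell_comp_eq_minTour {k : ℕ} (hk : 2 ≤ k) (hkN : k ≤ N) {g : Fin N → Fin N}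
    (hg : g.Injective) :
    ell (fun i j => r (g i) (g j)) k = 1 / 2 * minTour r ((firstPoints N k).image g) := by
  rw [ell, dif_pos ⟨hk, hkN⟩, minTour, firstPoints_eq_image hkN, Finset.image_image]
  exact congrArg (fun s => 1 / 2 * sInf s)
    (setOf_isCycle_sum_eq_tourCosts r (hg.comp (Fin.castLE_injective hkN)))

theorem ell_eq_minTour {k : ℕ} (hk : 2 ≤ k) (hkN : k ≤ N) :
    ell r k = 1 / 2 * minTour r (firstPoints N k) := by
  simpa using ell_comp_eq_minTour r hk hkN Function.injective_id

theorem ell_comp_eq_of_forall_lt {k : ℕ} {g : Fin N → Fin N}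
    (hg : ∀ z : Fin N, (z : ℕ) < k → g z = z) :
    ell (fun i j => r (g i) (g j)) k = ell r k := by
  unfold ell
  split_ifs with h
  · have hfix : ∀ i : Fin k, g (Fin.castLE h.2 i) = Fin.castLE h.2 i := fun i => hg _ i.isLt
    simp only [hfix]
  · rfl

end Ell

namespace LengthMinimal

variable {N : ℕ} {r : Fin N → Fin N → ℝ}

theorem ell_le_of_forall_lt_eq (hmin : LengthMinimal r) (τ : Perm (Fin N)) {n : ℕ} (hn : n ≤ N)
    (heq : ∀ m < n, ell r m = ell (fun i j => r (τ i) (τ j)) m) :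
    ell r n ≤ ell (fun i j => r (τ i) (τ j)) n := by
  rcases hmin τ with h | ⟨m, -, hpre, hlt⟩
  · exact (h n hn).le
  · rcases lt_trichotomy m n with hmn | rfl | hnm
    · exact absurd (heq m hmn) hlt.ne
    · exact hlt.le
    · exact (hpre n hnm).le

theorem minTour_firstPoints_succ_le (hmin : LengthMinimal r) {w : ℕ} (hw : 1 ≤ w) (hwN : w < N)
    {b : Fin N} (hb : w < (b : ℕ)) :
    minTour r (firstPoints N (w + 1)) ≤ minTour r (insert b (firstPoints N w)) := by
  set x : Fin N := ⟨w, hwN⟩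
  have hfix : ∀ z : Fin N, (z : ℕ) < w → swap x b z = z := fun z hz =>
    swap_apply_of_ne_of_ne (by rintro rfl; simp [x] at hz) (by rintro rfl; omega)
  have himg : (firstPoints N w).image (swap x b) = firstPoints N w := by
    rw [Finset.image_congr (g := id) fun z hz => hfix z (mem_firstPoints.mp hz), Finset.image_id]
  have hle := hmin.ell_le_of_forall_lt_eq (swap x b) hwN fun m hm =>
    (ell_comp_eq_of_forall_lt r fun z hz => hfix z (by omega)).symm
  rw [ell_eq_minTour r (by omega) hwN, ell_comp_eq_minTour r (by omega) hwN (swap x b).injective,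
    firstPoints_succ hwN, Finset.image_insert, swap_apply_left, himg] at hle
  rw [firstPoints_succ hwN]
  linarith

theorem dist_pred_le (hmin : LengthMinimal r) (hr : IsUltramat r) (u : ℕ) (hu : u < N)
    (k : Fin N) (hk : (k : ℕ) < u) : r ⟨u - 1, by omega⟩ ⟨u, hu⟩ ≤ r k ⟨u, hu⟩ := by
  induction u using Nat.strong_induction_on generalizing k with
  | _ u ih =>
  set b : Fin N := ⟨u, hu⟩
  set t := r ⟨u - 1, by omega⟩ b
  by_contra! hkb
  have hku : (k : ℕ) < u - 1 := by
    refine lt_of_le_of_ne (by omega) fun h => hkb.ne ?_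
    rw [show k = ⟨u - 1, by omega⟩ from Fin.ext h]
  have hex : ∃ w, (k : ℕ) < w ∧ ∃ hw : w < N, t ≤ r ⟨w, hw⟩ b := ⟨u - 1, hku, by omega, le_rfl⟩
  obtain ⟨hkw, hwN, hwb⟩ := Nat.find_spec hex
  set w := Nat.find hex
  have hwu : w < u := (Nat.find_min' hex ⟨hku, by omega, le_rfl⟩).trans_lt (by omega)
  have hprev : r ⟨w - 1, by omega⟩ b < t := by
    rcases (show (k : ℕ) = w - 1 ∨ (k : ℕ) < w - 1 by omega) with h | h
    · rwa [show (⟨w - 1, _⟩ : Fin N) = k from Fin.ext h.symm]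
    · have := Nat.find_min hex (show w - 1 < w by omega)
      push Not at this
      exact this h _
  have hgap : t ≤ r ⟨w - 1, by omega⟩ ⟨w, hwN⟩ := (hr.eq_of_lt (hprev.trans_le hwb)) ▸ hwb
  have hfar : ∀ z ∈ firstPoints N w, t ≤ r z ⟨w, hwN⟩ := fun z hz =>
    hgap.trans (ih w hwu hwN z (mem_firstPoints.mp hz))
  have hlt := minTour_insert_lt_minTour_insert hr (by simp [mem_firstPoints])
    (by simp [b, mem_firstPoints]; omega) hfar (mem_firstPoints.mpr (by simp; omega)) hprev
  rw [← firstPoints_succ hwN] at hlt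
  exact (hmin.minTour_firstPoints_succ_le (by omega) hwN hwu).not_gt hlt

end LengthMinimal

/-- For a positive ultrametric on `{1,…,N}` whose enumeration is length-minimal, the
distance from point `n` to point `n−1` is minimal among the distances from point `n` to
the points `1,…,n−1`: `r(n−1,n) = min_{1 ≤ k ≤ n−1} r(k,n)`. (Point `m` is encoded as
the index `m−1 : Fin N`.) -/
theorem lengthMinimal_dist_pred_isLeast
    {N : ℕ} (r : Fin N → Fin N → ℝ)
    (hult : IsUltramat r)
    (hmin : LengthMinimal r)
    (n : ℕ) (hn2 : 2 ≤ n) (hnN : n ≤ N) :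
    IsLeast { x : ℝ | ∃ k : Fin N, (k : ℕ) + 1 < n ∧ x = r k ⟨n - 1, by omega⟩ }
      (r ⟨n - 2, by omega⟩ ⟨n - 1, by omega⟩) := by
  refine ⟨⟨⟨n - 2, by omega⟩, by simp; omega, rfl⟩, ?_⟩
  rintro x ⟨k, hk, rfl⟩
  have h := hmin.dist_pred_le hult (n - 1) (by omega) k (by omega)
  simpa only [show n - 1 - 1 = n - 2 by omega] using h
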